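/- Let G be a finite simple graph and x ∈ V(G) such that G \ x is a forest. Then either V(G) = N[x] and G \ x has no edges, or V(G) \ N[x] contains a vertex of degree at most one in G, or G contains an induced cycle C containing x such that every vertex of V(C) \ {x}, except for possibly one, has degree two in G. -/

import Mathlib

open SimpleGraph

/-- `G` contains a subdivision of `K₄` as a (not necessarily induced) subgraph:
there are four branch vertices joined by six pairwise internally disjoint paths. -/
def HasK4Subdivision {V : Type*} (G : SimpleGraph V) : Prop :=
  ∃ b : Fin 4 → V, Function.Injective b ∧
    ∃ P : ∀ i j : Fin 4, i < j → G.Walk (b i) (b j),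
      (∀ (i j : Fin 4) (hij : i < j), (P i j hij).IsPath) ∧
      (∀ (i j : Fin 4) (hij : i < j) (k l : Fin 4) (hkl : k < l), (i, j) ≠ (k, l) → ∀ w,
        w ∈ (P i j hij).support → w ∈ (P k l hkl).support →
          (w = b i ∨ w = b j) ∧ (w = b k ∨ w = b l))

/-- A graph is series-parallel if it contains no subdivision of `K₄` as a
(not necessarily induced) subgraph. -/
def SeriesParallel {V : Type*} (G : SimpleGraph V) : Prop := ¬ HasK4Subdivision G

/-- `G` has an induced subgraph isomorphic to a subdivision of `K₄`: four branch
vertices joined by six pairwise internally disjoint paths, such that every edge of `G`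
between vertices of the union of the paths is an edge of one of the paths. -/
def HasInducedK4Subdivision {V : Type*} (G : SimpleGraph V) : Prop :=
  ∃ b : Fin 4 → V, Function.Injective b ∧
    ∃ P : ∀ i j : Fin 4, i < j → G.Walk (b i) (b j),
      (∀ (i j : Fin 4) (hij : i < j), (P i j hij).IsPath) ∧
      (∀ (i j : Fin 4) (hij : i < j) (k l : Fin 4) (hkl : k < l), (i, j) ≠ (k, l) → ∀ w,
        w ∈ (P i j hij).support → w ∈ (P k l hkl).support →
          (w = b i ∨ w = b j) ∧ (w = b k ∨ w = b l)) ∧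
      (∀ a c : V, (∃ (i j : Fin 4) (hij : i < j), a ∈ (P i j hij).support) →
        (∃ (i j : Fin 4) (hij : i < j), c ∈ (P i j hij).support) → G.Adj a c →
          ∃ (i j : Fin 4) (hij : i < j), s(a, c) ∈ (P i j hij).edges)

/-- `G` is ISK4-free: no induced subgraph of `G` is a subdivision of `K₄`. -/
def ISK4Free {V : Type*} (G : SimpleGraph V) : Prop := ¬ HasInducedK4Subdivision G

/-- `G` is triangle-free. -/
def TriangleFree {V : Type*} (G : SimpleGraph V) : Prop := G.CliqueFree 3

/-- `G` has no induced subgraph isomorphic to `K₃,₃`. -/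
def K33Free {V : Type*} (G : SimpleGraph V) : Prop :=
  ¬ ∃ a b : Fin 3 → V, Function.Injective a ∧ Function.Injective b ∧
    (∀ i j, a i ≠ b j) ∧ (∀ i j, G.Adj (a i) (b j)) ∧
    (∀ i j, ¬ G.Adj (a i) (a j)) ∧ (∀ i j, ¬ G.Adj (b i) (b j))

/-- `C` is the vertex set of an induced cycle of `G`: the induced subgraph on `C` is
connected and every vertex of `C` has exactly two neighbors in `C`. -/
def IsInducedCycle {V : Type*} (G : SimpleGraph V) (C : Set V) : Prop :=
  C.Finite ∧ 3 ≤ C.ncard ∧ (G.induce C).Connected ∧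
    ∀ v ∈ C, (G.neighborSet v ∩ C).ncard = 2

/-- A hole is an induced cycle of length at least 4. -/
def IsHole {V : Type*} (G : SimpleGraph V) (C : Set V) : Prop :=
  IsInducedCycle G C ∧ 4 ≤ C.ncard

/-- `(C, x)` is a wheel: `C` is a hole and `x` has at least three neighbors in `C`. -/
def IsWheel {V : Type*} (G : SimpleGraph V) (C : Set V) (x : V) : Prop :=
  IsHole G C ∧ x ∉ C ∧ 3 ≤ (G.neighborSet x ∩ C).ncard

/-- The number of spokes of the wheel `(C, x)`. -/
noncomputable def numSpokes {V : Type*} (G : SimpleGraph V) (C : Set V) (x : V) : ℕ :=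
  (G.neighborSet x ∩ C).ncard

/-- `S` is (the vertex set of) a sector of the wheel `(C, x)`: a maximal path of the
hole `C` containing no spoke (neighbor of `x`) in its interior.  Here this is rendered
as: `S` is maximal among the subsets of `C` inducing a connected subgraph in which no
vertex with two neighbors inside the subset is a neighbor of `x`. -/
def IsSector {V : Type*} (G : SimpleGraph V) (C : Set V) (x : V) (S : Set V) : Prop :=
  S ⊆ C ∧ (G.induce S).Connected ∧
  (∀ v ∈ S, (G.neighborSet v ∩ S).ncard = 2 → ¬ G.Adj x v) ∧
  (∀ T, S ⊆ T → T ⊆ C → (G.induce T).Connected →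
    (∀ v ∈ T, (G.neighborSet v ∩ T).ncard = 2 → ¬ G.Adj x v) → T = S)

/-- The interior of a sector of a wheel with center `x`: the sector minus its two
ends (which are spokes, i.e. neighbors of `x`). -/
def sectorInterior {V : Type*} (G : SimpleGraph V) (x : V) (S : Set V) : Set V :=
  S \ G.neighborSet x

/-- The wheel `(C, x)` is a proper wheel in `G`. -/
def IsProperWheel {V : Type*} (G : SimpleGraph V) (C : Set V) (x : V) : Prop :=
  IsWheel G C x ∧ ∀ v, v ∉ C → v ≠ x →
    (∃ S, IsSector G C x S ∧ G.neighborSet v ∩ C ⊆ S) ∧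
    (3 ≤ (G.neighborSet v ∩ C).ncard → G.Adj v x)

/-- The wheel `(C, x)` is a proper wheel in the subgraph of `G` induced by `A`. -/
def IsProperWheelOn {V : Type*} (G : SimpleGraph V) (A : Set V) (C : Set V) (x : V) : Prop :=
  C ⊆ A ∧ x ∈ A ∧ IsWheel G C x ∧
  ∀ v ∈ A, v ∉ C → v ≠ x →
    (∃ S, IsSector G C x S ∧ G.neighborSet v ∩ C ⊆ S) ∧
    (3 ≤ (G.neighborSet v ∩ C).ncard → G.Adj v x)

/-- `p` is an induced path in `G`. -/
def IsInducedPath {V : Type*} {u w : V} (G : SimpleGraph V) (p : G.Walk u w) : Prop :=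
  p.IsPath ∧ ∀ a ∈ p.support, ∀ b ∈ p.support, G.Adj a b → s(a, b) ∈ p.edges

/-- `K` is (the vertex set of) a connected component of the subgraph of `G` induced
by `A`. -/
def IsCompOf {V : Type*} (G : SimpleGraph V) (A : Set V) (K : Set V) : Prop :=
  K ⊆ A ∧ (G.induce K).Connected ∧ ∀ a ∈ K, ∀ b ∈ A, G.Adj a b → b ∈ K

/-- `x` is a non-offensive vertex for the wheel `(C, v)`. -/
def NonOffensive {V : Type*} (G : SimpleGraph V) (C : Set V) (v x : V) : Prop :=
  ∃ S1 S2 : Set V, IsSector G C v S1 ∧ IsSector G C v S2 ∧ S1 ≠ S2 ∧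
    (S1 ∩ S2).Nonempty ∧ G.Adj x v ∧
    (G.neighborSet x ∩ S1).Nonempty ∧ (G.neighborSet x ∩ S2).Nonempty ∧
    G.neighborSet x ∩ C ⊆ S1 ∪ S2 ∧
    ∀ u, u ∉ C → u ≠ v → G.Adj u x → G.neighborSet u ∩ C ⊆ S1 ∪ S2

/-- `x` is an `a`-non-offensive vertex for the wheel `(C, v)`: it is non-offensive,
witnessed by two consecutive sectors meeting exactly in `{a}`. -/
def ANonOffensive {V : Type*} (G : SimpleGraph V) (C : Set V) (v a x : V) : Prop :=
  ∃ S1 S2 : Set V, IsSector G C v S1 ∧ IsSector G C v S2 ∧ S1 ≠ S2 ∧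
    S1 ∩ S2 = {a} ∧ G.Adj x v ∧
    (G.neighborSet x ∩ S1).Nonempty ∧ (G.neighborSet x ∩ S2).Nonempty ∧
    G.neighborSet x ∩ C ⊆ S1 ∪ S2 ∧
    ∀ u, u ∉ C → u ≠ v → G.Adj u x → G.neighborSet u ∩ C ⊆ S1 ∪ S2

/-- The wheel `(C, v)` is `k`-almost proper, witnessed by the spokes `xs 0, …, xs (k-1)`
(no two of which lie in a common sector) and the set `X` of vertices outside the wheel:
the wheel is proper in `G \ X`, and every member of `X` is `xs i`-non-offensive for
some `i`. -/
def IsAlmostProperWheel {V : Type*} (G : SimpleGraph V) (C : Set V) (v : V) (k : ℕ)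
    (xs : Fin k → V) (X : Set V) : Prop :=
  IsWheel G C v ∧
  (∀ i, xs i ∈ G.neighborSet v ∩ C) ∧
  (∀ i j, i ≠ j → ¬ ∃ S, IsSector G C v S ∧ xs i ∈ S ∧ xs j ∈ S) ∧
  (∀ x ∈ X, x ∉ C ∧ x ≠ v) ∧
  (∀ u, u ∉ C → u ≠ v → u ∉ X →
    (∃ S, IsSector G C v S ∧ G.neighborSet u ∩ C ⊆ S) ∧
    (3 ≤ (G.neighborSet u ∩ C).ncard → G.Adj u v)) ∧
  (∀ x ∈ X, ∃ i, ANonOffensive G C v (xs i) x)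

/-- The induced subgraph on `S` is a subdivision of `K₁,₃` with `a`, `b`, `c` as its
vertices of degree one (equivalently, a tree whose set of leaves is exactly `{a, b, c}`). -/
def IsK13SubdivisionWithLeaves {V : Type*} (G : SimpleGraph V) (S : Set V) (a b c : V) : Prop :=
  a ∈ S ∧ b ∈ S ∧ c ∈ S ∧ a ≠ b ∧ a ≠ c ∧ b ≠ c ∧
  (G.induce S).Connected ∧ (G.induce S).IsAcyclic ∧
  ∀ v ∈ S, ((G.neighborSet v ∩ S).ncard = 1 ↔ v = a ∨ v = b ∨ v = c)

/-- Adjacency relation of the graph obtained from `G` by contracting the set `K`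
to the single new vertex `none`. -/
def contractAdj {V : Type*} (G : SimpleGraph V) (K : Set V) :
    Option {v : V // v ∉ K} → Option {v : V // v ∉ K} → Prop
  | some a, some b => G.Adj a.1 b.1
  | some a, none => ∃ k ∈ K, G.Adj a.1 k
  | none, some b => ∃ k ∈ K, G.Adj k b.1
  | none, none => False

/-- The graph obtained from `G` by contracting `K` to the single new vertex `none`
(deleting arising loops and parallel edges). -/
def contractSet {V : Type*} (G : SimpleGraph V) (K : Set V) :
    SimpleGraph (Option {v : V // v ∉ K}) where
  Adj := contractAdj G K
  symm := by
    constructor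
    intro a b h
    match a, b, h with
    | none, none, h => exact False.elim h
    | none, some b, ⟨k, hk, ha⟩ => exact ⟨k, hk, ha.symm⟩
    | some a, none, ⟨k, hk, ha⟩ => exact ⟨k, hk, ha.symm⟩
    | some a, some b, h => exact G.adj_symm h
  loopless := by
    constructor
    rintro (_ | a) h
    · exact False.elim h
    · exact G.loopless.irrefl a.1 h

/-!
Let `F` be `G` with the edges at `x` removed, a forest, and mark the neighbours of `x`. Unless
the first alternative holds, `F` has an edge, and unless the second holds, every leaf of `F` is
marked. Such a forest has an *ear*: a path between two distinct marked vertices with unmarked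
interior, all of whose vertices except at most one have no neighbours off the path. Closing an
ear through `x` gives the required induced cycle.

Ears are found by induction on the number of edges: take a leaf `a` with neighbour `a'`. If `a'`
is marked, `a a'` is an ear. Otherwise delete the edge `a a'` and mark `a'`: an ear of the
smaller forest either avoids `a'`, or ends at `a'` and is prolonged by `a`.
-/

namespace SimpleGraph

variable {W : Type*} {F : SimpleGraph W}

theorem Walk.not_isIsolated_of_mem_support {u v w : W} {p : F.Walk u v} (hp : ¬ p.Nil)
    (hw : w ∈ p.support) : ¬ F.IsIsolated w := by
  obtain ⟨e, he, hwe⟩ := (mem_support_iff_exists_mem_edges_of_not_nil hp).mp hw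
  induction e using Sym2.ind with
  | _ y z =>
    rcases Sym2.mem_iff.mp hwe with rfl | rfl
    · exact (p.adj_of_mem_edges he).not_isIsolated_left
    · exact (p.adj_of_mem_edges he).not_isIsolated_right

theorem IsAcyclic.isInducedPath (hF : F.IsAcyclic) {u v : W} {p : F.Walk u v}
    (hp : p.IsPath) : IsInducedPath F p := by
  classical
  refine ⟨hp, fun a ha b hb hab => ?_⟩
  have hbridge := isBridge_iff_forall_walk_mem_edges.mp
    (isAcyclic_iff_forall_adj_isBridge.mp hF hab)
    ((p.takeUntil a ha).reverse.append (p.takeUntil b hb))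
  rw [Walk.edges_append, Walk.edges_reverse, List.mem_append, List.mem_reverse] at hbridge
  exact hbridge.elim (fun h => p.edges_takeUntil_subset_edges ha h)
    (fun h => p.edges_takeUntil_subset_edges hb h)

/-- The start of a longest path is a leaf. -/
theorem IsAcyclic.exists_neighborSet_eq_singleton [Finite W] (hF : F.IsAcyclic) (hE : F ≠ ⊥) :
    ∃ a a', F.neighborSet a = {a'} := by
  obtain ⟨u, v, huv⟩ := ne_bot_iff_exists_adj.mp hE
  have : Nonempty W := ⟨u⟩
  obtain ⟨a, b, p, hp, hmax⟩ := Walk.exists_isPath_forall_isPath_length_le_length F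
  have hnil : ¬ p.Nil := Walk.not_nil_iff_lt_length.mpr <|
    lt_of_lt_of_le (by simp) (hmax u v huv.toWalk (by simp [huv.ne]))
  refine ⟨a, p.snd, Set.eq_singleton_iff_unique_mem.mpr ⟨p.adj_snd hnil, fun z hz => ?_⟩⟩
  by_contra hzp
  have := hmax z b (Walk.cons (F.adj_symm hz) p)
    (hp.cons (fun h => hzp (hF.eq_snd_of_adj_start hp hz h)))
  simp at this

theorem isIsolated_deleteEdges_of_neighborSet_eq_singleton {a a' : W}
    (ha : F.neighborSet a = {a'}) : (F.deleteEdges {s(a, a')}).IsIsolated a := by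
  intro z hz
  obtain ⟨h, hne⟩ := deleteEdges_adj.mp hz
  obtain rfl : z = a' := by simpa [ha] using (mem_neighborSet F a z).mpr h
  exact hne (Set.mem_singleton _)

structure IsEar (F : SimpleGraph W) (X : Set W) (w : W) {a b : W} (p : F.Walk a b) : Prop where
  isPath : p.IsPath
  ne : a ≠ b
  start_mem : a ∈ X
  end_mem : b ∈ X
  notMem_of_ne : ∀ v ∈ p.support, v ≠ a → v ≠ b → v ∉ X
  neighborSet_subset : ∀ v ∈ p.support, v ≠ w → F.neighborSet v ⊆ {u | u ∈ p.support}

namespace IsEar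

variable {X : Set W} {w a a' b c : W} {p : F.Walk a b}

theorem reverse (hp : IsEar F X w p) : IsEar F X w p.reverse where
  isPath := hp.isPath.reverse
  ne := hp.ne.symm
  start_mem := hp.end_mem
  end_mem := hp.start_mem
  notMem_of_ne v hv hb ha := hp.notMem_of_ne v (by simpa using hv) ha hb
  neighborSet_subset v hv hw := by simpa using hp.neighborSet_subset v (by simpa using hv) hw

theorem notMem_support_of_isIsolated (hp : IsEar F X w p) {v : W} (hv : F.IsIsolated v) :
    v ∉ p.support := fun h =>
  p.not_isIsolated_of_mem_support (Walk.not_nil_of_ne hp.ne) h hv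

theorem edge (haa' : F.Adj a a') (ha : F.neighborSet a = {a'}) (haX : a ∈ X) (ha'X : a' ∈ X) :
    IsEar F X a' (Walk.cons haa' Walk.nil) := by
  refine ⟨by simp [haa'.ne], haa'.ne, haX, ha'X, by simp +contextual, ?_⟩
  simp only [Walk.support_cons, Walk.support_nil, List.mem_cons, List.not_mem_nil, or_false]
  rintro v (rfl | rfl) hv
  · simp [ha]
  · exact absurd rfl hv

theorem of_deleteEdges {p : (F.deleteEdges {s(a, a')}).Walk b c}
    (hp : IsEar (F.deleteEdges {s(a, a')}) (insert a' X) w p) (ha : F.neighborSet a = {a'})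
    (ha' : a' ∉ p.support) : IsEar F X w (p.mapLe (F.deleteEdges_le _)) := by
  have hap :=
    hp.notMem_support_of_isIsolated (isIsolated_deleteEdges_of_neighborSet_eq_singleton ha)
  refine ⟨hp.isPath.mapLe _, hp.ne, ?_, ?_, ?_, ?_⟩
  · exact Set.mem_of_mem_insert_of_ne hp.start_mem (fun h => ha' (h ▸ p.start_mem_support))
  · exact Set.mem_of_mem_insert_of_ne hp.end_mem (fun h => ha' (h ▸ p.end_mem_support))
  · simp only [Walk.support_mapLe_eq_support]
    exact fun v hv hb hc hX => hp.notMem_of_ne v hv hb hc (Set.mem_insert_of_mem _ hX)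
  · simp only [Walk.support_mapLe_eq_support]
    intro v hv hvw u hvu
    by_cases h : s(v, u) = s(a, a')
    · rcases Sym2.eq_iff.mp h with ⟨rfl, -⟩ | ⟨rfl, -⟩
      · exact absurd hv hap
      · exact absurd hv ha'
    · exact hp.neighborSet_subset v hv hvw (by simpa [deleteEdges_adj, h] using hvu)

theorem cons_deleteEdges {p : (F.deleteEdges {s(a, a')}).Walk a' b}
    (hp : IsEar (F.deleteEdges {s(a, a')}) (insert a' X) w p) (haa' : F.Adj a a')
    (ha : F.neighborSet a = {a'}) (haX : a ∈ X) (ha'X : a' ∉ X) :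
    IsEar F X w (Walk.cons haa' (p.mapLe (F.deleteEdges_le _))) := by
  have hap :=
    hp.notMem_support_of_isIsolated (isIsolated_deleteEdges_of_neighborSet_eq_singleton ha)
  refine ⟨(hp.isPath.mapLe _).cons (by simpa using hap), fun h => hap (h ▸ p.end_mem_support),
    haX, Set.mem_of_mem_insert_of_ne hp.end_mem hp.ne.symm, ?_, ?_⟩
  · simp only [Walk.support_cons, Walk.support_mapLe_eq_support, List.mem_cons]
    rintro v (rfl | hv) hva hvb
    · exact absurd rfl hva
    · by_cases hva' : v = a'
      · exact hva' ▸ ha'X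
      · exact fun hX => hp.notMem_of_ne v hv hva' hvb (Set.mem_insert_of_mem _ hX)
  · simp only [Walk.support_cons, Walk.support_mapLe_eq_support, List.mem_cons]
    rintro v (rfl | hv) hvw u hvu
    · obtain rfl : u = a' := by simpa [ha] using hvu
      exact Or.inr p.start_mem_support
    by_cases h : s(v, u) = s(a, a')
    · rcases Sym2.eq_iff.mp h with ⟨rfl, -⟩ | ⟨-, rfl⟩
      · exact absurd hv hap
      · exact Or.inl rfl
    · exact Or.inr (hp.neighborSet_subset v hv hvw (by simpa [deleteEdges_adj, h] using hvu))

end IsEar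

theorem IsAcyclic.exists_isEar [Finite W] {X : Set W} (hF : F.IsAcyclic)
    (hX : ∀ v u, F.neighborSet v = {u} → v ∈ X) (hE : F ≠ ⊥) :
    ∃ (w a b : W) (p : F.Walk a b), IsEar F X w p := by
  induction hn : F.edgeSet.ncard using Nat.strong_induction_on generalizing F X with
  | _ n ih =>
  obtain ⟨a, a', ha⟩ := hF.exists_neighborSet_eq_singleton hE
  have haa' : F.Adj a a' := by simp [← mem_neighborSet, ha]
  have haX : a ∈ X := hX a a' ha
  by_cases ha'X : a' ∈ X
  · exact ⟨a', a, a', _, IsEar.edge haa' ha haX ha'X⟩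
  obtain ⟨u, ha'u, hua⟩ : ∃ u, F.Adj a' u ∧ u ≠ a := by
    by_contra! h
    exact ha'X (hX a' a (Set.eq_singleton_iff_unique_mem.mpr ⟨haa'.symm, h⟩))
  have hlt : (F.deleteEdges {s(a, a')}).edgeSet.ncard < n := hn ▸ Set.ncard_lt_ncard
    (by simpa [edgeSet_deleteEdges] using haa')
  have hX' (v z : W) (hv : (F.deleteEdges {s(a, a')}).neighborSet v = {z}) : v ∈ insert a' X := by
    by_cases hva : v = a
    · subst hva
      have hz : z ∈ (F.deleteEdges {s(v, a')}).neighborSet v := hv ▸ Set.mem_singleton z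
      exact absurd hz (isIsolated_deleteEdges_of_neighborSet_eq_singleton ha z)
    by_cases hva' : v = a'
    · exact hva' ▸ Set.mem_insert _ _
    refine Set.mem_insert_of_mem _ (hX v z ?_)
    rw [← hv]
    ext y
    simp [deleteEdges_adj, hva, hva']
  have hE' : F.deleteEdges {s(a, a')} ≠ ⊥ :=
    ne_bot_iff_exists_adj.mpr ⟨a', u, by simp [deleteEdges_adj, ha'u, hua, haa'.ne']⟩
  obtain ⟨w, b, c, p, hp⟩ := ih _ hlt (hF.anti (F.deleteEdges_le _)) hX' hE' rfl
  by_cases ha'p : a' ∈ p.support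
  · obtain rfl | rfl : a' = b ∨ a' = c := by
      by_contra! h
      exact hp.notMem_of_ne a' ha'p h.1 h.2 (Set.mem_insert _ _)
    · exact ⟨w, a, c, _, hp.cons_deleteEdges haa' ha haX ha'X⟩
    · exact ⟨w, a, b, _, hp.reverse.cons_deleteEdges haa' ha haX ha'X⟩
  · exact ⟨w, b, c, _, hp.of_deleteEdges ha ha'p⟩

variable {V : Type*} {G : SimpleGraph V}

theorem isIsolated_deleteIncidenceSet (x : V) : (G.deleteIncidenceSet x).IsIsolated x :=
  fun _ h => (deleteIncidenceSet_adj.mp h).2.1 rfl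

theorem neighborSet_deleteIncidenceSet_of_not_adj {x v : V} (hvx : v ≠ x) (hxv : ¬ G.Adj x v) :
    (G.deleteIncidenceSet x).neighborSet v = G.neighborSet v := by
  ext z
  simp only [mem_neighborSet, deleteIncidenceSet_adj, and_iff_left_iff_imp]
  exact fun hz => ⟨hvx, fun hzx => hxv (hzx ▸ G.adj_symm hz)⟩

theorem isAcyclic_deleteIncidenceSet {x : V} (h : (G.induce {x}ᶜ).IsAcyclic) :
    (G.deleteIncidenceSet x).IsAcyclic := by
  intro u c hc
  have hsupp (v : V) (hv : v ∈ c.support) : v ∈ ({x}ᶜ : Set V) := fun hvx =>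
    c.not_isIsolated_of_mem_support hc.not_nil (hvx ▸ hv) (isIsolated_deleteIncidenceSet x)
  rw [← G.induce_deleteIncidenceSet_of_notMem (show x ∉ ({x}ᶜ : Set V) by simp)] at h
  exact h (c.induce _ hsupp) (Walk.IsCycle.of_map (f := (Embedding.induce _).toHom)
    (by rwa [Walk.map_induce]))

theorem Walk.IsCycle.isInducedCycle {u : V} {c : G.Walk u u} (hc : c.IsCycle)
    (hind : ∀ v ∈ c.support, ∀ w ∈ c.support, G.Adj v w → s(v, w) ∈ c.edges) :
    IsInducedCycle G {v | v ∈ c.support} := by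
  have hnbr (v : V) (hv : v ∈ c.support) :
      G.neighborSet v ∩ {v | v ∈ c.support} = c.toSubgraph.neighborSet v := by
    ext w
    simp only [Set.mem_inter_iff, mem_neighborSet, Set.mem_ofPred_eq, Subgraph.mem_neighborSet,
      adj_toSubgraph_iff_mem_edges]
    exact ⟨fun ⟨h, hw⟩ => hind v hv w hw h,
      fun h => ⟨c.adj_of_mem_edges h, c.snd_mem_support_of_mem_edges h⟩⟩
  have htwo (v : V) (hv : v ∈ c.support) :
      (G.neighborSet v ∩ {v | v ∈ c.support}).ncard = 2 := by
    rw [hnbr v hv]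
    exact hc.ncard_neighborSet_toSubgraph_eq_two hv
  have hfin : {v | v ∈ c.support}.Finite := c.support.finite_toSet
  refine ⟨hfin, ?_, c.connected_induce_support, htwo⟩
  calc 3 = (insert u (G.neighborSet u ∩ {v | v ∈ c.support})).ncard := by
        rw [Set.ncard_insert_of_notMem (by simp) (hfin.subset Set.inter_subset_right),
          htwo u c.start_mem_support]
    _ ≤ _ := Set.ncard_le_ncard
        (Set.insert_subset c.start_mem_support Set.inter_subset_right) hfin

theorem _root_.IsInducedPath.isInducedCycle_insert {x a b : V} {q : G.Walk a b}
    (hq : IsInducedPath G q) (hx : x ∉ q.support) (hab : a ≠ b) (hxa : G.Adj x a)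
    (hbx : G.Adj b x) (hint : ∀ v ∈ q.support, v ≠ a → v ≠ b → ¬ G.Adj x v) :
    IsInducedCycle G (insert x {v | v ∈ q.support}) := by
  set c := Walk.cons hxa (q.concat hbx)
  have hsupp (v : V) : v ∈ c.support ↔ v = x ∨ v ∈ q.support := by
    simp [c, Walk.support_concat, or_comm]
  have hedges (e : Sym2 V) : e ∈ c.edges ↔ e = s(x, a) ∨ e ∈ q.edges ∨ e = s(b, x) := by
    simp [c, Walk.edges_concat]
  have hxedge (v : V) (hv : v ∈ q.support) (hxv : G.Adj x v) : s(x, v) ∈ c.edges := by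
    by_cases hva : v = a
    · simp [hedges, hva]
    by_cases hvb : v = b
    · simp [hedges, hvb, Sym2.eq_swap]
    exact absurd hxv (hint v hv hva hvb)
  rw [show insert x {v | v ∈ q.support} = {v | v ∈ c.support} from
    Set.ext fun v => (hsupp v).symm]
  apply Walk.IsCycle.isInducedCycle
  · rw [Walk.cons_isCycle_iff]
    refine ⟨hq.1.concat hx hbx, fun h => ?_⟩
    simp only [Walk.edges_concat, List.concat_eq_append, List.mem_append, List.mem_singleton,
      Sym2.eq_iff] at h
    rcases h with h | ⟨rfl, -⟩ | ⟨-, rfl⟩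
    · exact hx (q.fst_mem_support_of_mem_edges h)
    · exact hx q.end_mem_support
    · exact hab rfl
  · intro v hv w hw hvw
    rw [hsupp] at hv hw
    rcases hv with rfl | hv
    · rcases hw with rfl | hw
      · exact absurd hvw (G.loopless.irrefl _)
      · exact hxedge w hw hvw
    rcases hw with rfl | hw
    · rw [Sym2.eq_swap]
      exact hxedge v hv hvw.symm
    · exact (hedges _).mpr (Or.inr (Or.inl (hq.2 v hv w hw hvw)))

theorem IsEar.exists_isInducedCycle {x w a b : V} (hF : (G.deleteIncidenceSet x).IsAcyclic)
    {p : (G.deleteIncidenceSet x).Walk a b}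
    (hp : IsEar (G.deleteIncidenceSet x) (G.neighborSet x) w p) :
    ∃ C : Set V, IsInducedCycle G C ∧ x ∈ C ∧
      ∀ v ∈ C, v ≠ x → v ≠ w → (G.neighborSet v).ncard = 2 := by
  have hx : x ∉ p.support := hp.notMem_support_of_isIsolated (isIsolated_deleteIncidenceSet x)
  have hq : IsInducedPath G (p.mapLe (G.deleteIncidenceSet_le x)) := by
    refine ⟨hp.isPath.mapLe _, fun u hu v hv huv => ?_⟩
    rw [Walk.support_mapLe_eq_support] at hu hv
    rw [Walk.edges_mapLe_eq_edges]
    exact (hF.isInducedPath hp.isPath).2 u hu v hv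
      (deleteIncidenceSet_adj.mpr ⟨huv, ne_of_mem_of_not_mem hu hx, ne_of_mem_of_not_mem hv hx⟩)
  have hcyc := hq.isInducedCycle_insert (by simpa using hx) hp.ne hp.start_mem
    (G.adj_symm hp.end_mem) (fun v hv => by simpa using hp.notMem_of_ne v (by simpa using hv))
  refine ⟨_, hcyc, Set.mem_insert x _, fun v hv hvx hvw => ?_⟩
  have hvp : v ∈ p.support := by simpa [hvx] using hv
  rw [← hcyc.2.2.2 v hv, Set.inter_eq_left.mpr]
  intro u hu
  by_cases hux : u = x
  · exact Or.inl hux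
  · have := hp.neighborSet_subset v hvp hvw (deleteIncidenceSet_adj.mpr ⟨hu, hvx, hux⟩)
    simpa using Or.inr this

end SimpleGraph

/-- If `G \ x` is a forest, then either `V(G) = N[x]` and `G \ x`
has no edges, or `V(G) \ N[x]` contains a vertex of degree at most one, or `G` has an
induced cycle through `x` in which every vertex other than `x`, except possibly one,
has degree two in `G`. -/
theorem forest_plus_vertex {V : Type*} [Fintype V] (G : SimpleGraph V) (x : V)
    (hforest : (G.induce ({x}ᶜ : Set V)).IsAcyclic) :
    (insert x (G.neighborSet x) = Set.univ ∧
      ∀ a b : V, a ≠ x → b ≠ x → ¬ G.Adj a b) ∨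
    (∃ v, v ∉ insert x (G.neighborSet x) ∧ (G.neighborSet v).ncard ≤ 1) ∨
    (∃ C : Set V, IsInducedCycle G C ∧ x ∈ C ∧
      ∃ w, ∀ v ∈ C, v ≠ x → v ≠ w → (G.neighborSet v).ncard = 2) := by
  rw [or_iff_not_imp_left, or_iff_not_imp_left]
  intro hstar hdeg
  push Not at hdeg
  obtain ⟨u, v, hu, hv, huv⟩ : ∃ u v, u ≠ x ∧ v ≠ x ∧ G.Adj u v := by
    by_contra! h
    refine hstar ⟨Set.eq_univ_of_forall fun v => ?_, h⟩
    by_contra hv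
    obtain ⟨u, hu⟩ := Set.nonempty_of_ncard_ne_zero (hdeg v hv).ne_bot
    exact h v u (fun e => hv (e ▸ Set.mem_insert _ _))
      (fun e => hv (Set.mem_insert_of_mem _ (G.adj_symm (e ▸ hu)))) hu
  have hleaf (v u : V) (hvu : (G.deleteIncidenceSet x).neighborSet v = {u}) :
      v ∈ G.neighborSet x := by
    have hu : u ∈ (G.deleteIncidenceSet x).neighborSet v := hvu ▸ Set.mem_singleton u
    have hvx : v ≠ x := by
      rintro rfl
      exact isIsolated_deleteIncidenceSet v u hu
    by_contra hxv
    have := hdeg v (by simp [hvx, hxv])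
    rw [← neighborSet_deleteIncidenceSet_of_not_adj hvx hxv, hvu, Set.ncard_singleton] at this
    exact this.false
  have hF := isAcyclic_deleteIncidenceSet hforest
  obtain ⟨w, a, b, p, hp⟩ := hF.exists_isEar hleaf
    (ne_bot_iff_exists_adj.mpr ⟨u, v, deleteIncidenceSet_adj.mpr ⟨huv, hu, hv⟩⟩)
  obtain ⟨C, hC, hxC, hdeg2⟩ := hp.exists_isInducedCycle hF
  exact ⟨C, hC, hxC, w, hdeg2⟩
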